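/- Let n ≥ 1 and let u : ℝⁿ → ℝ be smooth with u > 0 everywhere. Set A := −Δu, w := log ∘ u, and Q := ‖∇w‖² + A·u⁻¹. Suppose Q attains a local maximum at a point p ∈ ℝⁿ. Then, evaluating all quantities at p: 0 ≥ (2/n)Q² + 2(A/u)Q + (ΔA)/u − A²/u² − (2/u)⟨∇A, ∇w⟩. -/

import Mathlib

open scoped BigOperators

/-- The gradient of `f : ℝⁿ → ℝ`. -/
noncomputable def egrad {n : ℕ} (f : EuclideanSpace ℝ (Fin n) → ℝ)
    (x : EuclideanSpace ℝ (Fin n)) : EuclideanSpace ℝ (Fin n) := gradient f x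

/-- The partial derivative of `f` in the `i`-th coordinate direction. -/
noncomputable def epd {n : ℕ} (i : Fin n) (f : EuclideanSpace ℝ (Fin n) → ℝ)
    (x : EuclideanSpace ℝ (Fin n)) : ℝ := fderiv ℝ f x (EuclideanSpace.single i 1)

/-- The Laplacian `Δf = ∑ᵢ ∂ᵢ∂ᵢ f` (trace of the Hessian). -/
noncomputable def elap {n : ℕ} (f : EuclideanSpace ℝ (Fin n) → ℝ)
    (x : EuclideanSpace ℝ (Fin n)) : ℝ := ∑ i, epd i (epd i f) x

/-- The squared Hilbert–Schmidt norm `‖D²f‖²` of the Hessian of `f`. -/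
noncomputable def ehess2 {n : ℕ} (f : EuclideanSpace ℝ (Fin n) → ℝ)
    (x : EuclideanSpace ℝ (Fin n)) : ℝ := ∑ i, ∑ j, (epd i (epd j f) x) ^ 2

section aux
variable {n : ℕ}
local notation "E" => EuclideanSpace ℝ (Fin n)

lemma contDiff_epd {f : E → ℝ} (hf : ContDiff ℝ (⊤ : ℕ∞) f) (i : Fin n) :
    ContDiff ℝ (⊤ : ℕ∞) (epd i f) :=
  (hf.fderiv_right (by simp)).clm_apply contDiff_const

lemma epd_add {f g : E → ℝ} {x : E} (hf : DifferentiableAt ℝ f x)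
    (hg : DifferentiableAt ℝ g x) (i : Fin n) :
    epd i (fun y => f y + g y) x = epd i f x + epd i g x := by
  simp [epd, fderiv_fun_add hf hg]

lemma epd_neg {f : E → ℝ} {x : E} (i : Fin n) :
    epd i (fun y => -(f y)) x = -(epd i f x) := by
  simp [epd, fderiv_neg]

lemma epd_sum {ι : Type*} [Fintype ι] {F : ι → E → ℝ} {x : E}
    (h : ∀ j, DifferentiableAt ℝ (F j) x) (i : Fin n) :
    epd i (fun y => ∑ j, F j y) x = ∑ j, epd i (F j) x := by
  simp [epd, fderiv_fun_sum (fun j _ => h j)]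

lemma epd_mul {f g : E → ℝ} {x : E} (hf : DifferentiableAt ℝ f x)
    (hg : DifferentiableAt ℝ g x) (i : Fin n) :
    epd i (fun y => f y * g y) x = f x * epd i g x + g x * epd i f x := by
  simp [epd, fderiv_fun_mul hf hg]

lemma epd_log {f : E → ℝ} {x : E} (hf : DifferentiableAt ℝ f x) (hx : f x ≠ 0) (i : Fin n) :
    epd i (fun y => Real.log (f y)) x = (f x)⁻¹ * epd i f x := by
  have := (hf.hasFDerivAt.log hx).fderiv
  simp [epd, this]

lemma epd_inv {f : E → ℝ} {x : E} (hf : DifferentiableAt ℝ f x) (hx : f x ≠ 0) (i : Fin n) :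
    epd i (fun y => (f y)⁻¹) x = -(epd i f x) * ((f x) ^ 2)⁻¹ := by
  have h := ((hasFDerivAt_inv' (𝕜 := ℝ) hx).comp x hf.hasFDerivAt).fderiv
  show (fderiv ℝ (Inv.inv ∘ f) x) _ = _
  rw [h]
  simp [epd, ContinuousLinearMap.mulLeftRight_apply]
  ring

lemma egrad_apply {f : E → ℝ} {x : E} (hf : DifferentiableAt ℝ f x) (i : Fin n) :
    egrad f x i = epd i f x := by
  have h : HasFDerivAt f ((InnerProductSpace.toDual ℝ _) (gradient f x)) x :=
    (hasGradientAt_iff_hasFDerivAt).1 hf.hasGradientAt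
  have := h.fderiv
  simp only [epd, egrad, this, InnerProductSpace.toDual_apply_apply]
  rw [EuclideanSpace.inner_single_right]
  simp

lemma norm_egrad_sq {f : E → ℝ} {x : E} (hf : DifferentiableAt ℝ f x) :
    ‖egrad f x‖ ^ 2 = ∑ i, (epd i f x) ^ 2 := by
  rw [← real_inner_self_eq_norm_sq]
  rw [PiLp.inner_apply]
  simp only [RCLike.inner_apply, conj_trivial]
  exact Finset.sum_congr rfl fun i _ => by rw [egrad_apply hf i]; ring

lemma inner_egrad {f g : E → ℝ} {x : E} (hf : DifferentiableAt ℝ f x)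
    (hg : DifferentiableAt ℝ g x) :
    (inner ℝ (egrad f x) (egrad g x) : ℝ) = ∑ i, epd i f x * epd i g x := by
  rw [PiLp.inner_apply]
  simp only [RCLike.inner_apply, conj_trivial]
  exact Finset.sum_congr rfl fun i _ => by rw [egrad_apply hf i, egrad_apply hg i, mul_comm]

lemma epd_comm {f : E → ℝ} (hf : ContDiff ℝ (⊤ : ℕ∞) f) (i j : Fin n) (x : E) :
    epd i (epd j f) x = epd j (epd i f) x := by
  have hd : Differentiable ℝ (fderiv ℝ f) :=
    (hf.fderiv_right (m := (⊤ : ℕ∞)) (by simp)).differentiable (by simp)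
  have key : ∀ a b : Fin n, epd a (epd b f) x =
      fderiv ℝ (fderiv ℝ f) x (EuclideanSpace.single a 1) (EuclideanSpace.single b 1) := by
    intro a b
    show (fderiv ℝ (fun y => (fderiv ℝ f y) (EuclideanSpace.single b 1)) x) _ = _
    rw [fderiv_clm_apply (hd x) (differentiableAt_const _)]
    simp
  rw [key i j, key j i]
  exact (hf.contDiffAt.isSymmSndFDerivAt (by rw [minSmoothness_of_isRCLikeNormedField]; exact WithTop.coe_le_coe.mpr le_top)) _ _

lemma second_deriv_nonpos_1d {g : ℝ → ℝ} (hg : ContDiff ℝ (⊤ : ℕ∞) g) (hmax : IsLocalMax g 0) :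
    deriv (deriv g) 0 ≤ 0 := by
  by_contra hc
  push_neg at hc
  have hg1 : Differentiable ℝ g := hg.differentiable (by simp)
  have hg' : ContDiff ℝ ((⊤:ℕ∞) : WithTop ℕ∞) (deriv g) :=
    (contDiff_infty_iff_deriv.mp (hg.of_le (by simp))).2
  have hder0 : deriv g 0 = 0 := hmax.deriv_eq_zero
  have hD : HasDerivAt (deriv g) (deriv (deriv g) 0) 0 :=
    ((hg'.differentiable (by simp)) 0).hasDerivAt
  have hslope := hasDerivAt_iff_tendsto_slope.mp hD
  have hev : ∀ᶠ t in nhdsWithin (0:ℝ) (Set.Ioi 0), 0 < deriv g t := by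
    have h1 : ∀ᶠ t in nhdsWithin (0:ℝ) ({0}ᶜ), 0 < slope (deriv g) 0 t :=
      hslope (Ioi_mem_nhds hc)
    have h2 : nhdsWithin (0:ℝ) (Set.Ioi 0) ≤ nhdsWithin (0:ℝ) ({0}ᶜ) :=
      nhdsWithin_mono _ (fun t ht => ne_of_gt ht)
    filter_upwards [h2 h1, self_mem_nhdsWithin] with t ht ht'
    have hts : slope (deriv g) 0 t = deriv g t / t := by
      simp [slope, hder0, div_eq_inv_mul]
    rw [hts] at ht
    have htpos : (0:ℝ) < t := ht'
    have h3 := mul_pos ht htpos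
    rwa [div_mul_cancel₀ _ (ne_of_gt htpos)] at h3
  have hev2 : ∀ᶠ t in nhdsWithin (0:ℝ) (Set.Ioi 0), g t ≤ g 0 :=
    nhdsWithin_le_nhds hmax
  obtain ⟨δ, hδpos, hδ'⟩ := Metric.eventually_nhds_iff.mp
    (eventually_nhdsWithin_iff.mp (hev.and hev2))
  have hδ : ∀ t : ℝ, 0 < t → dist t 0 < δ → 0 < deriv g t ∧ g t ≤ g 0 :=
    fun t h1 h2 => hδ' h2 h1
  set a := δ / 2 with ha
  have hapos : 0 < a := by positivity
  have hkey : ∀ t ∈ Set.Ioc 0 a, 0 < deriv g t ∧ g t ≤ g 0 := by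
    intro t ht
    refine hδ t ht.1 ?_
    rw [Real.dist_eq, sub_zero, abs_of_pos ht.1]
    linarith [ht.2]
  have hmono : StrictMonoOn g (Set.Icc 0 a) := by
    apply strictMonoOn_of_deriv_pos (convex_Icc 0 a) (hg.continuous.continuousOn)
    intro t ht
    rw [interior_Icc] at ht
    exact (hkey t ⟨ht.1, le_of_lt ht.2⟩).1
  have h5 := hmono (Set.left_mem_Icc.mpr hapos.le) (Set.right_mem_Icc.mpr hapos.le) hapos
  have h6 := (hkey a ⟨hapos, le_rfl⟩).2
  linarith

lemma epd_epd_self_nonpos {Q : E → ℝ}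
    (hQ : ContDiff ℝ (⊤ : ℕ∞) Q) {p : E} (hmax : IsLocalMax Q p)
    (i : Fin n) : epd i (epd i Q) p ≤ 0 := by
  set v := EuclideanSpace.single i (1:ℝ) with hv
  set L : ℝ → E := fun t => p + t • v with hL
  have hLd : ∀ t : ℝ, HasDerivAt L v t := fun t =>
    ((hasDerivAt_id t).smul_const v).const_add p |>.congr_deriv (by simp)
  have hLc : ContDiff ℝ (⊤ : ℕ∞) L := contDiff_const.add (contDiff_id.smul contDiff_const)
  have hL0 : L 0 = p := by simp [hL]
  have hg : ContDiff ℝ (⊤ : ℕ∞) (Q ∘ L) := hQ.comp hLc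
  have hgmax : IsLocalMax (Q ∘ L) 0 := by
    have htend : Filter.Tendsto L (nhds 0) (nhds p) := by
      rw [← hL0]
      exact hLc.continuous.continuousAt
    have hmax' : IsMaxFilter Q (nhds p) (L 0) := by rw [hL0]; exact hmax
    exact hmax'.comp_tendsto htend
  have hd1 : deriv (Q ∘ L) = fun t => epd i Q (L t) := by
    funext t
    exact (((hQ.differentiable (by simp)) (L t)).hasFDerivAt.comp_hasDerivAt t (hLd t)).deriv
  have hd2 : deriv (deriv (Q ∘ L)) 0 = epd i (epd i Q) p := by
    rw [hd1]
    have hder : HasDerivAt (fun t => epd i Q (L t)) (fderiv ℝ (epd i Q) p v) 0 := by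
      have hdiff : DifferentiableAt ℝ (epd i Q) p :=
        (((hQ.fderiv_right (m := (⊤ : ℕ∞)) (by simp)).clm_apply contDiff_const).differentiable (by simp)) p
      rw [← hL0]
      exact (hL0 ▸ hdiff.hasFDerivAt).comp_hasDerivAt 0 (hLd 0)
    rw [hder.deriv]
    rfl
  rw [← hd2]
  exact second_deriv_nonpos_1d hg hgmax

end aux

/-- For a positive smooth solution `u` of `-Δu = A` on `ℝⁿ`,
with `w = log u` and `Q = ‖∇w‖² + A/u`, at a local maximum point `p` of `Q`:
`0 ≥ (2/n)Q² + 2(A/u)Q + (ΔA)/u − A²/u² − (2/u)⟨∇A, ∇w⟩`. -/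
theorem harnack_quantity_max_point (n : ℕ) (hn : 1 ≤ n)
    (u : EuclideanSpace ℝ (Fin n) → ℝ) (hu : ContDiff ℝ (⊤ : ℕ∞) u)
    (hpos : ∀ x, 0 < u x)
    (A : EuclideanSpace ℝ (Fin n) → ℝ) (hA : A = fun x => -(elap u x))
    (w : EuclideanSpace ℝ (Fin n) → ℝ) (hw : w = Real.log ∘ u)
    (Q : EuclideanSpace ℝ (Fin n) → ℝ)
    (hQ : Q = fun x => ‖egrad w x‖ ^ 2 + A x * (u x)⁻¹)
    (p : EuclideanSpace ℝ (Fin n)) (hmax : IsLocalMax Q p) :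
    0 ≥ (2 / (n : ℝ)) * (Q p) ^ 2 + 2 * (A p / u p) * Q p
      + elap A p / u p - (A p) ^ 2 / (u p) ^ 2
      - (2 / u p) * (inner ℝ (egrad A p) (egrad w p) : ℝ) := by
  have hune : ∀ x, u x ≠ 0 := fun x => (hpos x).ne'
  have dd : ∀ {f : EuclideanSpace ℝ (Fin n) → ℝ}, ContDiff ℝ (⊤ : ℕ∞) f →
      ∀ x, DifferentiableAt ℝ f x := fun hf x => hf.differentiable (by simp) x
  have hw' : ContDiff ℝ (⊤ : ℕ∞) w := by rw [hw]; exact hu.log hune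
  have hA' : ContDiff ℝ (⊤ : ℕ∞) A := by
    rw [hA]
    exact (ContDiff.sum fun i _ => contDiff_epd (contDiff_epd hu i) i).neg
  have hv' : ContDiff ℝ (⊤ : ℕ∞) (fun y => (u y)⁻¹) := hu.inv hune
  have hwj : ∀ j, ContDiff ℝ (⊤ : ℕ∞) (epd j w) := contDiff_epd hw'
  have hwjk : ∀ k j : Fin n, ContDiff ℝ (⊤ : ℕ∞) (epd k (epd j w)) := fun k j =>
    contDiff_epd (hwj j) k
  have hAj : ∀ k, ContDiff ℝ (⊤ : ℕ∞) (epd k A) := contDiff_epd hA'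
  -- first derivatives of w and u⁻¹
  have hwpd : ∀ (i : Fin n) x, epd i w x = (u x)⁻¹ * epd i u x := by
    intro i x
    rw [hw]
    exact epd_log (dd hu x) (hune x) i
  have hvpd : ∀ (i : Fin n) x, epd i (fun y => (u y)⁻¹) x = -(epd i w x) * (u x)⁻¹ := by
    intro i x
    rw [epd_inv (dd hu x) (hune x) i, hwpd i x]
    ring
  -- Q in coordinate form
  have hQs : Q = fun x => (∑ j, epd j w x * epd j w x) + A x * (u x)⁻¹ := by
    rw [hQ]; funext x
    rw [norm_egrad_sq (dd hw' x)]
    congr 1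
    exact Finset.sum_congr rfl fun j _ => by rw [pow_two]
  have hS' : ContDiff ℝ (⊤ : ℕ∞) (fun y => ∑ j, epd j w y * epd j w y) :=
    ContDiff.sum fun j _ => (hwj j).mul (hwj j)
  have hAv' : ContDiff ℝ (⊤ : ℕ∞) (fun y => A y * (u y)⁻¹) := hA'.mul hv'
  have hQ' : ContDiff ℝ (⊤ : ℕ∞) Q := by rw [hQs]; exact hS'.add hAv'
  -- Δw = -Q
  have hAu : ∀ x, (∑ i, epd i (epd i u) x) = -(A x) := by
    intro x; rw [hA]; simp [elap]
  have hlapw : ∀ x, (∑ i, epd i (epd i w) x) = -(Q x) := by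
    intro x
    have e1 : ∀ i : Fin n, epd i (epd i w) x
        = (u x)⁻¹ * epd i (epd i u) x + epd i u x * (-(epd i w x) * (u x)⁻¹) := by
      intro i
      have h2 : epd i w = fun y => (u y)⁻¹ * epd i u y := funext fun y => hwpd i y
      conv_lhs => rw [h2]
      rw [epd_mul (f := fun y => (u y)⁻¹) (g := epd i u) (dd hv' x)
        (dd (contDiff_epd hu i) x) i, hvpd i x]
    have e2 : ∀ i : Fin n, epd i u x * (-(epd i w x) * (u x)⁻¹)
        = -(epd i w x * epd i w x) := by
      intro i
      rw [hwpd i x]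
      ring
    calc (∑ i, epd i (epd i w) x)
        = ∑ i, ((u x)⁻¹ * epd i (epd i u) x + -(epd i w x * epd i w x)) :=
          Finset.sum_congr rfl fun i _ => by rw [e1 i, e2 i]
      _ = (u x)⁻¹ * (∑ i, epd i (epd i u) x) + -(∑ i, epd i w x * epd i w x) := by
          rw [Finset.sum_add_distrib, ← Finset.mul_sum, Finset.sum_neg_distrib]
      _ = -(Q x) := by
          rw [hAu x]
          simp only [hQs]
          ring
  -- gradient of Q vanishes at p
  have hQ0 : ∀ k : Fin n, epd k Q p = 0 := by
    intro k
    simp [epd, hmax.fderiv_eq_zero]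
  -- first derivative of Q as a function
  have hQpd : ∀ k : Fin n, epd k Q = fun x =>
      (∑ j, (epd j w x * epd k (epd j w) x + epd j w x * epd k (epd j w) x))
      + (A x * (-(epd k w x) * (u x)⁻¹) + (u x)⁻¹ * epd k A x) := by
    intro k; funext x
    conv_lhs => rw [hQs]
    rw [epd_add (f := fun y => ∑ j, epd j w y * epd j w y)
      (g := fun y => A y * (u y)⁻¹) (dd hS' x) (dd hAv' x) k]
    rw [epd_sum (F := fun j y => epd j w y * epd j w y)
      (fun j => dd ((hwj j).mul (hwj j)) x) k]
    rw [epd_mul (f := A) (g := fun y => (u y)⁻¹) (dd hA' x) (dd hv' x) k, hvpd k x]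
    congr 1
    exact Finset.sum_congr rfl fun j _ =>
      epd_mul (f := epd j w) (g := epd j w) (dd (hwj j) x) (dd (hwj j) x) k
  -- commuting third derivatives
  have hT : ∀ j : Fin n, (∑ k, epd k (epd k (epd j w)) p) = -(epd j Q p) := by
    intro j
    have swap : ∀ k : Fin n, epd k (epd k (epd j w)) p = epd j (epd k (epd k w)) p := by
      intro k
      have h1 : epd k (epd j w) = epd j (epd k w) := funext fun y => epd_comm hw' k j y
      rw [h1]
      exact epd_comm (hwj k) k j p
    rw [Finset.sum_congr rfl fun k _ => swap k]
    rw [← epd_sum (F := fun k => epd k (epd k w)) (fun k => dd (hwjk k k) p) j]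
    have hfun : (fun y => ∑ k, epd k (epd k w) y) = fun y => -(Q y) := funext hlapw
    rw [hfun, epd_neg (f := Q) j]
  have hzero : (∑ k, ∑ j, epd j w p * epd k (epd k (epd j w)) p) = 0 := by
    rw [Finset.sum_comm]
    apply Finset.sum_eq_zero
    intro j _
    rw [← Finset.mul_sum, hT j, hQ0 j]
    ring
  have hN' : ∀ k : Fin n, ContDiff ℝ (⊤ : ℕ∞) (fun y => -(epd k w y) * (u y)⁻¹) := fun k =>
    ((hwj k).neg).mul hv'
  have hT1' : ∀ k : Fin n, ContDiff ℝ (⊤ : ℕ∞)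
      (fun y => ∑ j, (epd j w y * epd k (epd j w) y + epd j w y * epd k (epd j w) y)) :=
    fun k => ContDiff.sum fun j _ => ((hwj j).mul (hwjk k j)).add ((hwj j).mul (hwjk k j))
  have hEraw : ∀ k : Fin n, epd k (epd k Q) p =
      (∑ j, ((epd j w p * epd k (epd k (epd j w)) p + epd k (epd j w) p * epd k (epd j w) p)
        + (epd j w p * epd k (epd k (epd j w)) p + epd k (epd j w) p * epd k (epd j w) p)))
      + ((A p * (-(epd k w p) * (-(epd k w p) * (u p)⁻¹) + (u p)⁻¹ * -(epd k (epd k w) p))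
          + (-(epd k w p) * (u p)⁻¹) * epd k A p)
        + ((u p)⁻¹ * epd k (epd k A) p + epd k A p * (-(epd k w p) * (u p)⁻¹))) := by
    intro k
    rw [hQpd k]
    rw [epd_add
      (f := fun y => ∑ j, (epd j w y * epd k (epd j w) y + epd j w y * epd k (epd j w) y))
      (g := fun y => A y * (-(epd k w y) * (u y)⁻¹) + (u y)⁻¹ * epd k A y)
      (dd (hT1' k) p) (dd ((hA'.mul (hN' k)).add (hv'.mul (hAj k))) p) k]
    rw [epd_add (f := fun y => A y * (-(epd k w y) * (u y)⁻¹))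
      (g := fun y => (u y)⁻¹ * epd k A y) (dd (hA'.mul (hN' k)) p) (dd (hv'.mul (hAj k)) p) k]
    rw [epd_mul (f := A) (g := fun y => -(epd k w y) * (u y)⁻¹) (dd hA' p) (dd (hN' k) p) k]
    rw [epd_mul (f := fun y => -(epd k w y)) (g := fun y => (u y)⁻¹)
      (dd (hwj k).neg p) (dd hv' p) k]
    rw [epd_mul (f := fun y => (u y)⁻¹) (g := epd k A) (dd hv' p) (dd (hAj k) p) k]
    rw [epd_neg (f := epd k w) k]
    rw [hvpd k p]
    rw [epd_sum
      (F := fun j y => (epd j w y * epd k (epd j w) y + epd j w y * epd k (epd j w) y))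
      (fun j => dd (((hwj j).mul (hwjk k j)).add ((hwj j).mul (hwjk k j))) p) k]
    congr 1
    exact Finset.sum_congr rfl fun j _ => by
      rw [epd_add (f := fun y => epd j w y * epd k (epd j w) y)
        (g := fun y => epd j w y * epd k (epd j w) y)
        (dd ((hwj j).mul (hwjk k j)) p) (dd ((hwj j).mul (hwjk k j)) p) k]
      rw [epd_mul (f := epd j w) (g := epd k (epd j w)) (dd (hwj j) p) (dd (hwjk k j) p) k]
  have hsplit : ∀ a b : Fin n → ℝ, (∑ j, ((a j + b j) + (a j + b j)))
      = 2 * (∑ j, a j) + 2 * (∑ j, b j) := by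
    intro a b
    rw [Finset.mul_sum, Finset.mul_sum, ← Finset.sum_add_distrib]
    exact Finset.sum_congr rfl fun j _ => by ring
  have hE' : ∀ k : Fin n, epd k (epd k Q) p =
      2 * (∑ j, epd j w p * epd k (epd k (epd j w)) p)
      + (2 * (∑ j, epd k (epd j w) p * epd k (epd j w) p)
      + ((A p * (u p)⁻¹) * (epd k w p * epd k w p)
      + (-((A p * (u p)⁻¹) * epd k (epd k w) p)
      + ((u p)⁻¹ * epd k (epd k A) p
      + -((2 * (u p)⁻¹) * (epd k A p * epd k w p)))))) := by
    intro k
    rw [hEraw k, hsplit (fun j => epd j w p * epd k (epd k (epd j w)) p)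
      (fun j => epd k (epd j w) p * epd k (epd j w) p)]
    ring
  have h1 : (∑ k, epd k (epd k Q) p) = _ := Finset.sum_congr rfl (fun k _ => hE' k)
  have h0 : elap Q p =
      2 * (∑ k, ∑ j, epd j w p * epd k (epd k (epd j w)) p)
      + (2 * (∑ k, ∑ j, epd k (epd j w) p * epd k (epd j w) p)
      + ((A p * (u p)⁻¹) * (∑ k, epd k w p * epd k w p)
      + (-((A p * (u p)⁻¹) * (∑ k, epd k (epd k w) p))
      + ((u p)⁻¹ * (∑ k, epd k (epd k A) p)
      + -((2 * (u p)⁻¹) * (∑ k, epd k A p * epd k w p)))))) := by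
    rw [show elap Q p = ∑ k, epd k (epd k Q) p from rfl, h1]
    simp only [Finset.sum_add_distrib, Finset.sum_neg_distrib, ← Finset.mul_sum]
  have hQp : Q p = (∑ j, epd j w p * epd j w p) + A p * (u p)⁻¹ := by
    simp only [hQs]
  have hSd : (∑ k, epd k w p * epd k w p) = Q p - A p * (u p)⁻¹ := by
    rw [hQp]; ring
  have hLd : (∑ k, epd k (epd k w) p) = -(Q p) := hlapw p
  have hLA : (∑ k, epd k (epd k A) p) = elap A p := rfl
  have hfinal : elap Q p =
      2 * (∑ k, ∑ j, epd k (epd j w) p * epd k (epd j w) p)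
      + 2 * (A p * (u p)⁻¹) * Q p - (A p * (u p)⁻¹) * (A p * (u p)⁻¹)
      + (u p)⁻¹ * elap A p - (2 * (u p)⁻¹) * (∑ k, epd k A p * epd k w p) := by
    rw [h0, hzero, hSd, hLd, hLA]
    ring
  have hn' : (0:ℝ) < n := by exact_mod_cast Nat.lt_of_lt_of_le Nat.zero_lt_one hn
  have hcs1 : (∑ k, epd k (epd k w) p) ^ 2 ≤ (n:ℝ) * ∑ k, (epd k (epd k w) p) ^ 2 := by
    have h := sq_sum_le_card_mul_sum_sq (s := (Finset.univ : Finset (Fin n)))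
      (f := fun k => epd k (epd k w) p)
    simpa using h
  have hcs2 : (∑ k, (epd k (epd k w) p) ^ 2)
      ≤ ∑ k, ∑ j, epd k (epd j w) p * epd k (epd j w) p := by
    apply Finset.sum_le_sum
    intro k _
    have h := Finset.single_le_sum (f := fun j => epd k (epd j w) p * epd k (epd j w) p)
      (fun j _ => mul_self_nonneg _) (Finset.mem_univ k)
    calc (epd k (epd k w) p)^2 = epd k (epd k w) p * epd k (epd k w) p := by rw [pow_two]
      _ ≤ _ := h
  have hcs : (Q p) ^ 2 ≤ (n:ℝ) * ∑ k, ∑ j, epd k (epd j w) p * epd k (epd j w) p := by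
    have he : (Q p)^2 = (∑ k, epd k (epd k w) p)^2 := by rw [hLd]; ring
    rw [he]
    calc (∑ k, epd k (epd k w) p)^2 ≤ (n:ℝ) * ∑ k, (epd k (epd k w) p)^2 := hcs1
      _ ≤ _ := mul_le_mul_of_nonneg_left hcs2 (le_of_lt hn')
  have h2n : 2/(n:ℝ) * (Q p)^2
      ≤ 2 * (∑ k, ∑ j, epd k (epd j w) p * epd k (epd j w) p) := by
    rw [div_mul_eq_mul_div, div_le_iff₀ hn']
    nlinarith [hcs]
  have hle : elap Q p ≤ 0 :=
    Finset.sum_nonpos fun k _ => epd_epd_self_nonpos hQ' hmax k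
  rw [inner_egrad (dd hA' p) (dd hw' p)]
  have hge : (2/(n:ℝ)) * (Q p)^2 + 2*(A p / u p) * Q p + elap A p / u p
      - (A p)^2/(u p)^2 - (2 / u p) * (∑ i, epd i A p * epd i w p)
      = 2/(n:ℝ) * (Q p)^2 + 2*(A p * (u p)⁻¹)*Q p - (A p * (u p)⁻¹)*(A p * (u p)⁻¹)
        + (u p)⁻¹ * elap A p - (2*(u p)⁻¹) * (∑ i, epd i A p * epd i w p) := by
    ring
  rw [ge_iff_le, hge]
  linarith [hfinal, hle, h2n]
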